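/- Let z₁, ..., z_n : Fin L → ℝ be non-constant logit vectors with ground-truth labels S₁, ..., S_n, and suppose (1/L)∑_i ∑_l (z_i)_l < ∑_i (z_i)_{S_i} < ∑_i max_l (z_i)_l. Then the function F(α) = ∑_i ∑_l (z_i)_l · softmax(α·z_i)_l is strictly increasing on [0, ∞), F(0) = (1/L)∑_i ∑_l (z_i)_l, lim_{α→∞} F(α) = ∑_i max_l (z_i)_l, and there exists a unique α* > 0 with F(α*) = ∑_i (z_i)_{S_i}. This α* is the unique minimizer over α ≥ 0 of the aggregated NLL −∑_i log softmax(α·z_i)_{S_i}. -/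

import Mathlib

open Real Finset Filter

noncomputable def softmax {L : ℕ} (v : Fin L → ℝ) (l : Fin L) : ℝ :=
  Real.exp (v l) / ∑ j, Real.exp (v j)

noncomputable def entropy {L : ℕ} (q : Fin L → ℝ) : ℝ :=
  -∑ l, q l * Real.log (q l)

/-! The mean logit `softmaxMean v α = ∑ l, v l * softmax (α • v) l` is the derivative of the
log-partition function `α ↦ log ∑ j, exp (α * v j)`. It is strictly increasing for non-constant `v`:
`(softmaxMean v β - softmaxMean v α) · Z(α) · Z(β)` is half of
`∑ l m, (v l - v m) * (exp (β v l + α v m) - exp (α v l + β v m))`, whose terms are nonnegative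
and positive when `v l ≠ v m`. As `α → ∞` the softmax concentrates on the maximal logits, so the
mean tends to `max v`. Summing over samples, `F` increases continuously from the average logit to
the sum of the maxima, and the intermediate value theorem gives the unique `α*`. The aggregated NLL
has derivative `F - ∑ i, z i (S i)`, which is monotone and vanishes at `α*`; so the NLL is convex
with its minimum at `α*`. -/

open Topology

lemma mul_exp_sub_exp_pos {α β x y : ℝ} (hαβ : α < β) (hxy : x ≠ y) :
    0 < (x - y) * (exp (β * x + α * y) - exp (α * x + β * y)) := by
  rcases hxy.lt_or_gt with h | h
  · exact mul_pos_of_neg_of_neg (by linarith) (by rw [sub_neg, exp_lt_exp]; nlinarith)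
  · exact mul_pos (by linarith) (by rw [sub_pos, exp_lt_exp]; nlinarith)

lemma tendsto_exp_mul_atTop_of_nonpos {c : ℝ} (hc : c ≤ 0) :
    Tendsto (fun α => exp (α * c)) atTop (𝓝 (if c = 0 then 1 else 0)) := by
  rcases hc.lt_or_eq with hc | rfl
  · rw [if_neg hc.ne]
    exact tendsto_exp_atBot.comp ((tendsto_mul_const_atBot_of_neg hc).2 tendsto_id)
  · simp

lemma isMinOn_of_hasDerivAt_of_monotone {f f' : ℝ → ℝ} (hf : ∀ x, HasDerivAt f (f' x) x)
    (hf' : Monotone f') {a : ℝ} (ha : f' a = 0) : IsMinOn f Set.univ a := by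
  have hconv : ConvexOn ℝ Set.univ f :=
    Monotone.convexOn_univ_of_deriv (fun x => (hf x).differentiableAt)
      (by simpa only [funext fun x => (hf x).deriv] using hf')
  refine hconv.isMinOn_of_rightDeriv_eq_zero (by simp) ?_
  rw [(hf a).hasDerivWithinAt.derivWithin (uniqueDiffWithinAt_Ioi a), ha]

section Softmax

variable {L : ℕ}

noncomputable def softmaxMean (v : Fin L → ℝ) (α : ℝ) : ℝ :=
  ∑ l, v l * softmax (fun j => α * v j) l

lemma sum_exp_pos [Nonempty (Fin L)] (w : Fin L → ℝ) : 0 < ∑ j, exp (w j) :=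
  sum_pos (fun _ _ => exp_pos _) univ_nonempty

lemma softmax_const (c : ℝ) (l : Fin L) : softmax (fun _ => c) l = 1 / L := by
  simp [softmax, div_mul_cancel_right₀ (exp_ne_zero c)]

lemma softmax_add_const (w : Fin L → ℝ) (c : ℝ) :
    softmax (fun j => w j + c) = softmax w := by
  ext l
  simp only [softmax, exp_add, ← sum_mul, mul_div_mul_right _ _ (exp_ne_zero c)]

lemma log_softmax (w : Fin L → ℝ) (l : Fin L) :
    log (softmax w l) = w l - log (∑ j, exp (w j)) := by
  have : ∑ j, exp (w j) ≠ 0 := (sum_pos (fun _ _ => exp_pos _) ⟨l, mem_univ l⟩).ne'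
  rw [softmax, log_div (exp_ne_zero _) this, log_exp]

lemma softmaxMean_zero (v : Fin L → ℝ) : softmaxMean v 0 = 1 / L * ∑ l, v l := by
  simp only [softmaxMean, zero_mul, softmax_const]
  rw [← sum_mul, mul_comm]

lemma softmaxMean_eq_div (v : Fin L → ℝ) (α c : ℝ) :
    softmaxMean v α = (∑ l, v l * exp (α * (v l - c))) / ∑ j, exp (α * (v j - c)) := by
  have : (fun j => α * v j) = fun j => α * (v j - c) + α * c := by ext; ring
  rw [softmaxMean, this, softmax_add_const, sum_div]
  simp only [softmax, mul_div_assoc]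

lemma hasDerivAt_log_sum_exp_mul [Nonempty (Fin L)] (v : Fin L → ℝ) (α : ℝ) :
    HasDerivAt (fun α => log (∑ j, exp (α * v j))) (softmaxMean v α) α := by
  have hZ : HasDerivAt (fun α => ∑ j, exp (α * v j)) (∑ j, exp (α * v j) * v j) α :=
    HasDerivAt.fun_sum fun j _ => ((hasDerivAt_mul_const (v j)).exp)
  convert hZ.log (sum_exp_pos _).ne' using 1
  rw [softmaxMean_eq_div v α 0]
  simp only [sub_zero, mul_comm (v _)]

lemma hasDerivAt_log_softmax_mul [Nonempty (Fin L)] (v : Fin L → ℝ) (l : Fin L) (α : ℝ) :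
    HasDerivAt (fun α => log (softmax (fun j => α * v j) l)) (v l - softmaxMean v α) α := by
  simp only [log_softmax]
  exact (hasDerivAt_mul_const (v l)).sub (hasDerivAt_log_sum_exp_mul v α)

lemma continuous_softmaxMean [Nonempty (Fin L)] (v : Fin L → ℝ) : Continuous (softmaxMean v) := by
  unfold softmaxMean softmax
  exact continuous_finsetSum _ fun l _ => continuous_const.mul
    (Continuous.div (by fun_prop) (by fun_prop) fun α => (sum_exp_pos _).ne')

lemma softmaxMean_strictMono (v : Fin L → ℝ) (hv : ¬ ∃ c, ∀ l, v l = c) :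
    StrictMono (softmaxMean v) := by
  intro α β hαβ
  push Not at hv
  obtain ⟨l₀, -⟩ := hv 0
  obtain ⟨m₀, hne⟩ := hv (v l₀)
  have : Nonempty (Fin L) := ⟨l₀⟩
  set g : Fin L → Fin L → ℝ := fun l m => exp (β * v l + α * v m) - exp (α * v l + β * v m)
  have hcross : (∑ l, v l * exp (β * v l)) * (∑ m, exp (α * v m))
      - (∑ l, v l * exp (α * v l)) * (∑ m, exp (β * v m)) = ∑ l, ∑ m, v l * g l m := by
    simp only [sum_mul_sum, ← sum_sub_distrib, g, exp_add, mul_sub, mul_assoc]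
  have hsymm : ∑ l, ∑ m, (v l - v m) * g l m = 2 * ∑ l, ∑ m, v l * g l m := by
    have : ∑ l, ∑ m, v m * g l m = -∑ l, ∑ m, v l * g l m := by
      rw [sum_comm, ← sum_neg_distrib]
      refine sum_congr rfl fun l _ => ?_
      rw [← sum_neg_distrib]
      refine sum_congr rfl fun m _ => ?_
      simp only [g]
      ring_nf
    simp only [sub_mul, sum_sub_distrib, this]
    ring
  have hnonneg : ∀ l m, 0 ≤ (v l - v m) * g l m := fun l m => by
    rcases eq_or_ne (v l) (v m) with h | h
    · simp [h]
    · exact (mul_exp_sub_exp_pos hαβ h).le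
  have hpos : 0 < ∑ l, ∑ m, (v l - v m) * g l m :=
    sum_pos' (fun l _ => sum_nonneg fun m _ => hnonneg l m) ⟨m₀, mem_univ _,
      sum_pos' (fun m _ => hnonneg m₀ m) ⟨l₀, mem_univ _, mul_exp_sub_exp_pos hαβ hne⟩⟩
  rw [softmaxMean_eq_div v α 0, softmaxMean_eq_div v β 0,
    div_lt_div_iff₀ (sum_exp_pos _) (sum_exp_pos _)]
  simp only [sub_zero]
  linarith

lemma tendsto_softmaxMean_atTop [Nonempty (Fin L)] (v : Fin L → ℝ) :
    Tendsto (softmaxMean v) atTop (𝓝 (univ.sup' univ_nonempty v)) := by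
  set M := univ.sup' univ_nonempty v
  have hterm (l : Fin L) :
      Tendsto (fun α => exp (α * (v l - M))) atTop (𝓝 (if v l = M then 1 else 0)) := by
    simpa only [sub_eq_zero] using
      tendsto_exp_mul_atTop_of_nonpos (sub_nonpos.2 (le_sup' v (mem_univ l)))
  have hcount : 0 < ∑ l, (if v l = M then (1 : ℝ) else 0) := by
    obtain ⟨l, -, hl⟩ := exists_mem_eq_sup' univ_nonempty v
    exact sum_pos' (fun _ _ => by positivity) ⟨l, mem_univ _, by simp [← hl, M]⟩
  have hmax : ∑ l, v l * (if v l = M then (1 : ℝ) else 0) =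
      M * ∑ l, (if v l = M then (1 : ℝ) else 0) := by
    rw [mul_sum]
    exact sum_congr rfl fun l _ => by split_ifs with h <;> simp [h]
  have hlim := (tendsto_finsetSum univ fun l _ => (hterm l).const_mul (v l)).div
    (tendsto_finsetSum univ fun l _ => hterm l) hcount.ne'
  rw [hmax, mul_div_cancel_right₀ _ hcount.ne'] at hlim
  exact hlim.congr fun α => (softmaxMean_eq_div v α M).symm

end Softmax

theorem global_temperature_scaling {n L : ℕ} (hL : 0 < L)
    (z : Fin n → Fin L → ℝ) (S : Fin n → Fin L)
    (hnc : ∀ i, ¬ ∃ c, ∀ l, z i l = c)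
    (h1 : (1 / (L : ℝ)) * ∑ i, ∑ l, z i l < ∑ i, z i (S i))
    (h2 : ∑ i, z i (S i) <
      ∑ i, Finset.univ.sup' ⟨⟨0, hL⟩, Finset.mem_univ _⟩ (z i)) :
    StrictMonoOn (fun α : ℝ => ∑ i, ∑ l, z i l * softmax (fun j => α * z i j) l)
      (Set.Ici 0) ∧
    (∑ i, ∑ l, z i l * softmax (fun j => (0 : ℝ) * z i j) l) =
      (1 / (L : ℝ)) * ∑ i, ∑ l, z i l ∧
    Tendsto (fun α : ℝ => ∑ i, ∑ l, z i l * softmax (fun j => α * z i j) l) atTop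
      (nhds (∑ i, Finset.univ.sup' ⟨⟨0, hL⟩, Finset.mem_univ _⟩ (z i))) ∧
    ∃! αs : ℝ, 0 < αs ∧
      (∑ i, ∑ l, z i l * softmax (fun j => αs * z i j) l) = ∑ i, z i (S i) ∧
      ∀ α : ℝ, 0 ≤ α →
        (-∑ i, Real.log (softmax (fun j => αs * z i j) (S i))) ≤
          (-∑ i, Real.log (softmax (fun j => α * z i j) (S i))) := by
  have : Nonempty (Fin L) := ⟨⟨0, hL⟩⟩
  rcases isEmpty_or_nonempty (Fin n) with hn | hn
  · simp at h1
  set F : ℝ → ℝ := fun α => ∑ i, softmaxMean (z i) α with hF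
  set T := ∑ i, z i (S i)
  have hF_mono : StrictMono F := fun a b hab =>
    sum_lt_sum_of_nonempty univ_nonempty fun i _ => softmaxMean_strictMono (z i) (hnc i) hab
  have hF_zero : F 0 = 1 / L * ∑ i, ∑ l, z i l := by simp only [hF, softmaxMean_zero, mul_sum]
  have hF_lim : Tendsto F atTop (𝓝 (∑ i, univ.sup' univ_nonempty (z i))) :=
    tendsto_finsetSum _ fun i _ => tendsto_softmaxMean_atTop (z i)
  have hF_cont : Continuous F := continuous_finsetSum _ fun i _ => continuous_softmaxMean (z i)
  obtain ⟨α₁, hα₁_lt, hα₁_nonneg⟩ :=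
    ((hF_lim.eventually (eventually_gt_nhds h2)).and (eventually_ge_atTop 0)).exists
  obtain ⟨αs, ⟨hαs_pos, -⟩, hαs⟩ :=
    intermediate_value_Ioc hα₁_nonneg hF_cont.continuousOn ⟨hF_zero ▸ h1, hα₁_lt.le⟩
  have hNLL (α : ℝ) : HasDerivAt (fun α => -∑ i, log (softmax (fun j => α * z i j) (S i)))
      (F α - T) α := by
    have := (HasDerivAt.fun_sum (u := univ) fun i _ => hasDerivAt_log_softmax_mul (z i) (S i) α).neg
    rwa [sum_sub_distrib, neg_sub] at this
  have hmin := isMinOn_of_hasDerivAt_of_monotone hNLL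
    (fun a b hab => sub_le_sub_right (hF_mono.monotone hab) T) (sub_eq_zero.2 hαs)
  exact ⟨hF_mono.strictMonoOn _, hF_zero, hF_lim,
    αs, ⟨hαs_pos, hαs, fun α _ => isMinOn_univ_iff.1 hmin α⟩,
    fun α hα => hF_mono.injective (hα.2.1.trans hαs.symm)⟩
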